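/- Let G be a finite simple graph with matching M, let α and β be two distinct free vertices, and let {u,v} ∈ M be a matched edge. Suppose P is an M-alternating path from α to the matched arc (u,v) and Q is an M-alternating path from β to the reverse matched arc (v,u), and suppose that no matched arc is traversed by both P and Q in the same direction. Then G contains an M-augmenting path whose endpoints are α and β. -/

import Mathlib

/-!
Common definitions: matchings as sets of edges, free vertices, alternating
paths (edge membership in `M` alternates, starting with a non-matching edge),
matched arcs (directed traversals of matched edges), etc.
-/

variable {V : Type*}

/-- `M` is a matching of `G`: a set of edges of `G` that are pairwise vertex-disjoint. -/
def IsMatchingSet (G : SimpleGraph V) (M : Set (Sym2 V)) : Prop :=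
  M ⊆ G.edgeSet ∧ ∀ e ∈ M, ∀ f ∈ M, e ≠ f → ∀ v : V, ¬(v ∈ e ∧ v ∈ f)

/-- A vertex is free w.r.t. `M` if it is not an endpoint of any edge of `M`. -/
def FreeVertex (M : Set (Sym2 V)) (v : V) : Prop := ∀ e ∈ M, v ∉ e

/-- The edges of a walk alternate between non-matching and matching edges,
beginning with a non-matching edge: the `i`-th edge is in `M` iff `i` is odd. -/
def AltEdges (M : Set (Sym2 V)) (l : List (Sym2 V)) : Prop :=
  ∀ (i : ℕ) (h : i < l.length), (l[i]'h ∈ M ↔ i % 2 = 1)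

/-- A walk traverses the arc `a = (u, v)`: it crosses the edge `{u, v}`
in the direction from `u` to `v`. -/
def Traverses {G : SimpleGraph V} {x y : V} (p : G.Walk x y) (a : V × V) : Prop :=
  ∃ d ∈ p.darts, SimpleGraph.Dart.toProd d = a

/-- A walk ends by traversing the arc `a = (u, v)`, i.e. its last dart goes
from `u` to `v`. -/
def EndsWithArc {G : SimpleGraph V} {x y : V} (p : G.Walk x y) (a : V × V) : Prop :=
  p.darts.getLast?.map SimpleGraph.Dart.toProd = some a

/-- There is an `M`-alternating path from the (free) vertex `α` to the
matched arc `a = (u, v)`: a simple path starting at `α` whose edges alternate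
(beginning with a non-matching edge) and which ends by traversing the matched
edge `{u, v}` from `u` to `v`. -/
def IsAltPathToArc (G : SimpleGraph V) (M : Set (Sym2 V)) (α : V) (a : V × V) : Prop :=
  ∃ p : G.Walk α a.2, p.IsPath ∧ AltEdges M p.edges ∧ EndsWithArc p a

/-- An alternating path of matched arcs `a 0, a 1, …, a (m-1)`: each is a
matched arc, the underlying matched edges are pairwise distinct, and
consecutive arcs are joined by an edge of `G` not in `M`. -/
def IsArcPathFn (G : SimpleGraph V) (M : Set (Sym2 V)) (a : ℕ → V × V) (m : ℕ) : Prop :=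
  (∀ i < m, s((a i).1, (a i).2) ∈ M) ∧
  (∀ i < m, ∀ j < m, i ≠ j → s((a i).1, (a i).2) ≠ s((a j).1, (a j).2)) ∧
  (∀ i, i + 1 < m → G.Adj (a i).2 (a (i + 1)).1 ∧ s((a i).2, (a (i + 1)).1) ∉ M)

/-- List version of an alternating path of matched arcs. -/
def IsArcPath (G : SimpleGraph V) (M : Set (Sym2 V)) (L : List (V × V)) : Prop :=
  (∀ a ∈ L, s(a.1, a.2) ∈ M) ∧
  (L.map fun a => s(a.1, a.2)).Nodup ∧
  List.Chain' (fun a b => G.Adj a.2 b.1 ∧ s(a.2, b.1) ∉ M) L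

open Classical in
/-- The matched arcs traversed by a walk, in order. -/
noncomputable def matchedArcs {G : SimpleGraph V} (M : Set (Sym2 V)) {x y : V}
    (p : G.Walk x y) : List (V × V) :=
  (p.darts.filter fun d => decide (SimpleGraph.Dart.edge d ∈ M)).map SimpleGraph.Dart.toProd

/-- There is an `M`-augmenting path between `x` and `y`: a simple path whose
edges alternate between matching and non-matching edges and whose first and
last edges are not in `M`. -/
def IsAugPathBetween (G : SimpleGraph V) (M : Set (Sym2 V)) (x y : V) : Prop :=
  ∃ p : G.Walk x y, p.IsPath ∧
    List.Chain' (fun e f => (e ∈ M ↔ f ∉ M)) p.edges ∧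
    (∀ e ∈ p.edges.head?, e ∉ M) ∧ (∀ e ∈ p.edges.getLast?, e ∉ M)

namespace SimpleGraph.Walk

variable {G : SimpleGraph V}

def myTake {u v : V} : (p : G.Walk u v) → (n : ℕ) → G.Walk u (p.getVert n)
  | .nil, _ => .nil
  | .cons _ _, 0 => .nil
  | .cons h q, (n+1) => .cons h (q.myTake n)

@[simp] lemma myTake_darts {u v : V} (p : G.Walk u v) (n : ℕ) :
    (p.myTake n).darts = p.darts.take n := by
  induction p generalizing n with
  | nil => simp [myTake]
  | cons h q ih =>
    cases n with
    | zero => simp [myTake]; rfl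
    | succ n => simp [myTake, ih]

@[simp] lemma myTake_support {u v : V} (p : G.Walk u v) (n : ℕ) :
    (p.myTake n).support = p.support.take (n+1) := by
  induction p generalizing n with
  | nil => simp [myTake]
  | cons h q ih =>
    cases n with
    | zero => simp [myTake]; rfl
    | succ n => simp [myTake, ih]

lemma myTake_getVert {u v : V} (p : G.Walk u v) (n k : ℕ) (h : k ≤ n) :
    (p.myTake n).getVert k = p.getVert k := by
  induction p generalizing n k with
  | nil => simp [myTake]
  | cons ha q ih =>
    cases n with
    | zero => interval_cases k; simp [myTake]; rfl
    | succ n =>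
      cases k with
      | zero => simp [myTake]
      | succ k => simpa [myTake] using ih n k (by omega)

@[simp] lemma myTake_edges {u v : V} (p : G.Walk u v) (n : ℕ) :
    (p.myTake n).edges = p.edges.take n := by
  simp [edges, List.map_take]

@[simp] lemma myTake_length {u v : V} (p : G.Walk u v) (n : ℕ) :
    (p.myTake n).length = min n p.length := by
  rw [← length_darts, myTake_darts, List.length_take, length_darts]

lemma myTake_isPath {u v : V} {p : G.Walk u v} (hp : p.IsPath) (n : ℕ) :
    (p.myTake n).IsPath := by
  rw [isPath_def, myTake_support]
  exact (List.take_sublist _ _).nodup hp.support_nodup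

lemma darts_getElem_toProd {u v : V} (p : G.Walk u v) (i : ℕ) (h : i < p.darts.length) :
    (p.darts[i]'h).toProd = (p.getVert i, p.getVert (i+1)) := by
  induction p generalizing i with
  | nil => simp at h
  | cons ha q ih =>
    cases i with
    | zero => simp [getVert_zero]
    | succ i =>
      simpa using ih i (by simpa using h)

lemma edges_getElem_eq {u v : V} (p : G.Walk u v) (i : ℕ) (h : i < p.darts.length) :
    p.edges[i]'(by simpa [edges] using h) = (p.darts[i]'h).edge := by
  simp [edges]

end SimpleGraph.Walk

open SimpleGraph SimpleGraph.Walk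

lemma AltEdges.take {M : Set (Sym2 V)} {l : List (Sym2 V)} (h : AltEdges M l) (n : ℕ) :
    AltEdges M (l.take n) := by
  intro i hi
  have hi' : i < l.length := by
    simp only [List.length_take] at hi; omega
  rw [List.getElem_take]
  exact h i hi'

lemma matched_dart_at {G : SimpleGraph V} {M : Set (Sym2 V)} {s t : V} (p : G.Walk s t)
    (halt : AltEdges M p.edges) (hlen : p.length % 2 = 0)
    {i : ℕ} (h1 : 1 ≤ i) (h2 : i ≤ p.length) :
    ∃ (k : ℕ) (hk : k < p.darts.length), (p.darts[k]'hk).edge ∈ M ∧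
      (p.getVert i = (p.darts[k]'hk).toProd.1 ∨ p.getVert i = (p.darts[k]'hk).toProd.2) ∧
      (k = i ∨ k + 1 = i) := by
  have hd : p.darts.length = p.length := p.length_darts
  have he : p.edges.length = p.length := p.length_edges
  rcases Nat.even_or_odd i with hev | hod
  · obtain ⟨m, hm⟩ := hev
    have hk : i - 1 < p.darts.length := by omega
    refine ⟨i - 1, hk, ?_, ?_, by omega⟩
    · have := halt (i - 1) (by omega)
      rw [edges_getElem_eq p (i-1) hk] at this
      exact this.mpr (by omega)
    · right
      rw [darts_getElem_toProd p (i-1) hk]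
      simp only
      congr 1
      omega
  · have hilt : i < p.length := by
      rcases hod with ⟨m, hm⟩; omega
    have hk : i < p.darts.length := by omega
    refine ⟨i, hk, ?_, ?_, by omega⟩
    · have := halt i (by omega)
      rw [edges_getElem_eq p i hk] at this
      exact this.mpr (by rcases hod with ⟨m, hm⟩; omega)
    · left
      rw [darts_getElem_toProd p i hk]

lemma free_eq_start {G : SimpleGraph V} {M : Set (Sym2 V)} {s t : V} (p : G.Walk s t)
    (halt : AltEdges M p.edges) (hlen : p.length % 2 = 0)
    {x : V} (hx : FreeVertex M x) (hmem : x ∈ p.support) : x = s := by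
  obtain ⟨i, hgv, hle⟩ := SimpleGraph.Walk.mem_support_iff_exists_getVert.mp hmem
  rcases Nat.eq_zero_or_pos i with h0 | h1
  · subst h0; rw [Walk.getVert_zero] at hgv; exact hgv.symm
  · exfalso
    obtain ⟨k, hk, hM, hx2, _⟩ := matched_dart_at p halt hlen h1 hle
    apply hx _ hM
    have : (p.darts[k]'hk).edge = s((p.darts[k]'hk).toProd.1, (p.darts[k]'hk).toProd.2) := rfl
    rw [this, Sym2.mem_iff]
    rcases hx2 with h | h
    · left; rw [← hgv, h]
    · right; rw [← hgv, h]

lemma endsWithArc_facts {G : SimpleGraph V} {M : Set (Sym2 V)} {s t : V} {p : G.Walk s t}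
    {a : V × V} (h : EndsWithArc p a) (ha : s(a.1, a.2) ∈ M) (halt : AltEdges M p.edges) :
    1 ≤ p.length ∧ p.length % 2 = 0 ∧
      ∃ hk : p.length - 1 < p.darts.length, (p.darts[p.length - 1]'hk).toProd = a := by
  unfold EndsWithArc at h
  obtain ⟨d, hd, hda⟩ := Option.map_eq_some_iff.mp h
  rw [List.getLast?_eq_getElem?] at hd
  have hne : p.darts ≠ [] := by rintro h'; rw [h'] at hd; simp at hd
  have hlen1 : 1 ≤ p.length := by
    rw [← p.length_darts]; exact List.length_pos_iff.mpr hne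
  have hk : p.length - 1 < p.darts.length := by rw [p.length_darts]; omega
  have hdel : p.darts[p.length - 1]'hk = d := by
    rw [p.length_darts] at hd
    rw [List.getElem?_eq_getElem hk] at hd
    exact Option.some.inj hd
  have hedge : (p.darts[p.length - 1]'hk).edge ∈ M := by
    rw [hdel]
    have : d.edge = s(a.1, a.2) := by
      show s(d.toProd.1, d.toProd.2) = _
      rw [hda]
    rwa [this]
  have := halt (p.length - 1) (by rw [p.length_edges]; omega)
  rw [edges_getElem_eq p (p.length - 1) hk] at this
  have hodd := this.mp hedge
  refine ⟨hlen1, by omega, hk, by rw [hdel]; exact hda⟩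

lemma myTake_endsWithArc {G : SimpleGraph V} {s t : V} (p : G.Walk s t) (k : ℕ)
    (hk : k < p.darts.length) :
    EndsWithArc (p.myTake (k+1)) ((p.darts[k]'hk).toProd) := by
  unfold EndsWithArc
  rw [myTake_darts, List.getLast?_eq_getElem?]
  have hlt : k < (p.darts.take (k+1)).length := by simp only [List.length_take]; omega
  have hlen : (p.darts.take (k+1)).length - 1 = k := by simp only [List.length_take]; omega
  rw [hlen, List.getElem?_eq_getElem hlt, List.getElem_take]
  rfl

lemma traverses_of_myTake {G : SimpleGraph V} {s t : V} {p : G.Walk s t} {n : ℕ} {a : V × V}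
    (h : Traverses (p.myTake n) a) : Traverses p a := by
  obtain ⟨d, hd, hda⟩ := h
  rw [myTake_darts] at hd
  exact ⟨d, (List.take_sublist _ _).subset hd, hda⟩

lemma aug_of_alt {M : Set (Sym2 V)} {l : List (Sym2 V)} (h : AltEdges M l)
    (hodd : l.length % 2 = 1) :
    List.Chain' (fun e f => (e ∈ M ↔ f ∉ M)) l ∧ (∀ e ∈ l.head?, e ∉ M) ∧
      (∀ e ∈ l.getLast?, e ∉ M) := by
  refine ⟨?_, ?_, ?_⟩
  · show List.IsChain _ l
    rw [List.isChain_iff_getElem]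
    intro i hi
    have h1 := h i (by omega)
    have h2 := h (i+1) (by omega)
    constructor
    · intro hmem hmem2
      have e1 : i % 2 = 1 := h1.mp hmem
      have e2 : (i+1) % 2 = 1 := h2.mp hmem2
      omega
    · intro hmem
      have : ¬ (i+1) % 2 = 1 := fun hc => hmem (h2.mpr hc)
      exact h1.mpr (by omega)
  · intro e he
    have hl : 0 < l.length := by omega
    rw [List.head?_eq_getElem?, List.getElem?_eq_getElem hl] at he
    have h0 := h 0 hl
    rw [Option.some.inj he] at h0
    simp at h0
    exact h0
  · intro e he
    have hl : l.length - 1 < l.length := by omega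
    rw [List.getLast?_eq_getElem?, List.getElem?_eq_getElem hl] at he
    have h0 := h (l.length - 1) hl
    rw [Option.some.inj he] at h0
    intro hmem
    have := h0.mp hmem
    omega


theorem aux_main (G : SimpleGraph V) (M : Set (Sym2 V)) (hM : IsMatchingSet G M)
    (α β : V) (hαβ : α ≠ β) (hα : FreeVertex M α) (hβ : FreeVertex M β) :
    ∀ n : ℕ, ∀ u v : V, s(u, v) ∈ M →
    ∀ P : G.Walk α v, P.IsPath → AltEdges M P.edges → EndsWithArc P (u, v) →
    ∀ Q : G.Walk β u, Q.IsPath → AltEdges M Q.edges → EndsWithArc Q (v, u) →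
    (∀ a : V × V, s(a.1, a.2) ∈ M → Traverses P a → ¬ Traverses Q a) →
    Q.length ≤ n → IsAugPathBetween G M α β := by
  intro n
  induction n with
  | zero =>
    intro u v huv P hP hPalt hPend Q hQ hQalt hQend hns hlen
    have huv' : s(v, u) ∈ M := by rwa [Sym2.eq_swap] at huv
    obtain ⟨h1, -, -⟩ := endsWithArc_facts hQend huv' hQalt
    omega
  | succ n ih =>
    intro u v huv P hP hPalt hPend Q hQ hQalt hQend hns hlen
    have huv' : s(v, u) ∈ M := by rwa [Sym2.eq_swap] at huv
    obtain ⟨hP1, hPev, hkP, hPlast⟩ := endsWithArc_facts hPend huv hPalt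
    obtain ⟨hQ1, hQev, hkQ, hQlast⟩ := endsWithArc_facts hQend huv' hQalt
    have hQv : Q.getVert (Q.length - 1) = v := by
      rw [darts_getElem_toProd Q (Q.length - 1) hkQ] at hQlast
      exact congrArg Prod.fst hQlast
    by_cases hsh : ∃ x, x ∈ P.support ∧ x ∈ (Q.myTake (Q.length - 1)).support ∧ x ≠ v
    · -- inductive case: a shared vertex other than v
      obtain ⟨x, hxP, hxQT, hxv⟩ := hsh
      have hxQ : x ∈ Q.support := by
        rw [myTake_support] at hxQT
        exact List.take_subset _ _ hxQT
      have hxα : x ≠ α := by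
        rintro rfl
        exact hαβ (free_eq_start Q hQalt hQev hα hxQ)
      have hxβ : x ≠ β := by
        rintro rfl
        exact hαβ (free_eq_start P hPalt hPev hβ hxP).symm
      obtain ⟨i, hgvi, hile⟩ := Walk.mem_support_iff_exists_getVert.mp hxP
      have hi1 : 1 ≤ i := by
        rcases Nat.eq_zero_or_pos i with h0 | h1
        · exfalso; subst h0; rw [Walk.getVert_zero] at hgvi; exact hxα hgvi.symm
        · exact h1
      obtain ⟨k, hk, hkM, hkx, hki⟩ := matched_dart_at P hPalt hPev hi1 hile
      obtain ⟨j, hgvj, hjle⟩ := Walk.mem_support_iff_exists_getVert.mp hxQT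
      have hjle' : j ≤ Q.length - 1 := by rw [myTake_length] at hjle; omega
      have hgvjQ : Q.getVert j = x := by
        rwa [myTake_getVert Q (Q.length - 1) j hjle'] at hgvj
      have hj1 : 1 ≤ j := by
        rcases Nat.eq_zero_or_pos j with h0 | h1
        · exfalso; subst h0; rw [Walk.getVert_zero] at hgvjQ; exact hxβ hgvjQ.symm
        · exact h1
      have hjne : j ≠ Q.length - 1 := by
        rintro rfl; rw [hQv] at hgvjQ; exact hxv hgvjQ.symm
      obtain ⟨k', hk', hk'M, hk'x, hk'j⟩ := matched_dart_at Q hQalt hQev hj1 (by omega)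
      have hedge : (Q.darts[k']'hk').edge = (P.darts[k]'hk).edge := by
        by_contra hne
        refine hM.2 _ hk'M _ hkM hne x ⟨?_, ?_⟩
        · have h0 : (Q.darts[k']'hk').edge
              = s((Q.darts[k']'hk').toProd.1, (Q.darts[k']'hk').toProd.2) := rfl
          rw [h0, Sym2.mem_iff, ← hgvjQ]
          exact hk'x
        · have h0 : (P.darts[k]'hk).edge
              = s((P.darts[k]'hk).toProd.1, (P.darts[k]'hk).toProd.2) := rfl
          rw [h0, Sym2.mem_iff, ← hgvi]
          exact hkx
      set dP := P.darts[k]'hk with hdPdef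
      set dQ := Q.darts[k']'hk' with hdQdef
      have hMP : s(dP.toProd.1, dP.toProd.2) ∈ M := hkM
      have htrP : Traverses P dP.toProd := ⟨dP, List.getElem_mem hk, rfl⟩
      have hQdP : dQ.toProd ≠ dP.toProd := by
        intro hcon
        exact hns dP.toProd hMP htrP ⟨dQ, List.getElem_mem hk', hcon⟩
      have hsymm : dQ = dP.symm := by
        rcases (dart_edge_eq_iff dQ dP).mp hedge with h | h
        · exact absurd (congrArg Dart.toProd h) hQdP
        · exact h
      have hdQprod : dQ.toProd = (dP.toProd.2, dP.toProd.1) := by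
        rw [hsymm]; rfl
      have hPend2 : P.getVert (k+1) = dP.toProd.2 :=
        (congrArg Prod.snd (darts_getElem_toProd P k hk)).symm
      have hQend2 : Q.getVert (k'+1) = dP.toProd.1 :=
        ((congrArg Prod.snd (darts_getElem_toProd Q k' hk')).symm).trans
          (congrArg Prod.snd hdQprod)
      refine ih dP.toProd.1 dP.toProd.2 hMP ((P.myTake (k+1)).copy rfl hPend2) ?_ ?_ ?_
        ((Q.myTake (k'+1)).copy rfl hQend2) ?_ ?_ ?_ ?_ ?_
      · simpa using myTake_isPath hP (k+1)
      · show AltEdges M ((P.myTake (k+1)).copy rfl hPend2).edges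
        rw [Walk.edges_copy, myTake_edges]
        exact hPalt.take (k+1)
      · show EndsWithArc _ _
        unfold EndsWithArc
        rw [Walk.darts_copy]
        have h0 := myTake_endsWithArc P k hk
        unfold EndsWithArc at h0
        rw [h0]
      · simpa using myTake_isPath hQ (k'+1)
      · show AltEdges M ((Q.myTake (k'+1)).copy rfl hQend2).edges
        rw [Walk.edges_copy, myTake_edges]
        exact hQalt.take (k'+1)
      · show EndsWithArc _ _
        unfold EndsWithArc
        rw [Walk.darts_copy]
        have h0 := myTake_endsWithArc Q k' hk'
        unfold EndsWithArc at h0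
        rw [h0, hdQprod]
      · intro a haM hta htb
        have htaP : Traverses P a := by
          obtain ⟨d, hd, hda⟩ := hta
          rw [Walk.darts_copy, myTake_darts] at hd
          exact ⟨d, (List.take_sublist _ _).subset hd, hda⟩
        have htbQ : Traverses Q a := by
          obtain ⟨d, hd, hda⟩ := htb
          rw [Walk.darts_copy, myTake_darts] at hd
          exact ⟨d, (List.take_sublist _ _).subset hd, hda⟩
        exact hns a haM htaP htbQ
      · rw [Walk.length_copy, myTake_length]
        have hd := Q.length_darts
        omega
    · -- base case: P and the truncated Q share only v
      push_neg at hsh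
      set Q2 : G.Walk β v := (Q.myTake (Q.length - 1)).copy rfl hQv with hQ2def
      have hQ2path : Q2.IsPath := by
        rw [hQ2def, Walk.isPath_copy]
        exact myTake_isPath hQ _
      have hQ2supp : ∀ x, x ∈ Q2.support ↔ x ∈ (Q.myTake (Q.length - 1)).support := by
        intro x; rw [hQ2def, Walk.support_copy]
      have hWpath : (P.append Q2.reverse).IsPath := by
        rw [Walk.isPath_def, Walk.support_append]
        apply List.Nodup.append hP.support_nodup
        · exact (List.tail_sublist _).nodup hQ2path.reverse.support_nodup
        · intro x hxP hxT
          have hxR : x ∈ Q2.reverse.support := List.mem_of_mem_tail hxT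
          have hxQT : x ∈ (Q.myTake (Q.length - 1)).support := by
            rw [Walk.support_reverse, List.mem_reverse] at hxR
            exact (hQ2supp x).mp hxR
          have hxv : x = v := hsh x hxP hxQT
          subst hxv
          have hcons := Q2.reverse.support_eq_cons
          have hnd := hQ2path.reverse.support_nodup
          rw [hcons] at hnd
          exact (List.nodup_cons.mp hnd).1 hxT
      have hlenP : P.edges.length = P.length := P.length_edges
      have hlenQ : Q.edges.length = Q.length := Q.length_edges
      have hWe : (P.append Q2.reverse).edges
          = P.edges ++ (Q.edges.take (Q.length - 1)).reverse := by
        rw [Walk.edges_append, Walk.edges_reverse, hQ2def, Walk.edges_copy, myTake_edges]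
      have hWalt : AltEdges M (P.edges ++ (Q.edges.take (Q.length - 1)).reverse) := by
        intro i hi
        have hiL : i < P.length + (Q.length - 1) := by
          simp only [List.length_append, List.length_reverse, List.length_take,
            hlenP, hlenQ] at hi
          omega
        by_cases hiP : i < P.edges.length
        · rw [List.getElem_append_left hiP]
          exact hPalt i hiP
        · push_neg at hiP
          rw [List.getElem_append_right hiP, List.getElem_reverse, List.getElem_take]
          have hb : (Q.edges.take (Q.length - 1)).length - 1 - (i - P.edges.length)
              < Q.edges.length := by
            simp only [List.length_take, hlenQ]
            omega
          refine (hQalt _ hb).trans ?_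
          simp only [List.length_take, hlenP, hlenQ] at *
          omega
      have halt2 : AltEdges M (P.append Q2.reverse).edges := by
        rw [hWe]; exact hWalt
      have hWlen : (P.append Q2.reverse).edges.length % 2 = 1 := by
        rw [hWe]
        simp only [List.length_append, List.length_reverse, List.length_take, hlenP, hlenQ]
        omega
      obtain ⟨c1, c2, c3⟩ := aug_of_alt halt2 hWlen
      exact ⟨P.append Q2.reverse, hWpath, c1, c2, c3⟩

/-- If `P` is an `M`-alternating path from the free vertex `α`
to the matched arc `(u, v)` and `Q` is an `M`-alternating path from the free
vertex `β ≠ α` to the reverse arc `(v, u)`, and no matched arc is traversed by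
both `P` and `Q` in the same direction, then `G` contains an `M`-augmenting
path with endpoints `α` and `β`. -/
theorem alt_paths_to_opposite_arcs_give_augmenting_path
    [Fintype V] (G : SimpleGraph V) (M : Set (Sym2 V)) (hM : IsMatchingSet G M)
    (α β : V) (hαβ : α ≠ β) (hα : FreeVertex M α) (hβ : FreeVertex M β)
    (u v : V) (huv : s(u, v) ∈ M)
    (P : G.Walk α v) (hP : P.IsPath) (hPalt : AltEdges M P.edges)
    (hPend : EndsWithArc P (u, v))
    (Q : G.Walk β u) (hQ : Q.IsPath) (hQalt : AltEdges M Q.edges)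
    (hQend : EndsWithArc Q (v, u))
    (hnoshare : ∀ a : V × V, s(a.1, a.2) ∈ M → Traverses P a → ¬ Traverses Q a) :
    IsAugPathBetween G M α β := by
  exact aux_main G M hM α β hαβ hα hβ Q.length u v huv P hP hPalt hPend Q hQ hQalt hQend hnoshare le_rfl
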